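/- arXiv:1411.1211 — 2 statements merged into one kernel-verified Lean document; each statement's English description precedes it below -/
import Mathlib

section
/- Let M be an n×n matrix over ℝ_max = ℝ ∪ {−∞} and let λ ∈ ℝ. If there exists u ∈ ℝⁿ (all entries finite) such that max_{1≤j≤n} (M_{ij} + u_j) = λ + u_i for every i = 1,…,n, then no row of M is identically −∞ and λ equals the maximal circuit mean ρ(M). -/
/-!
Rewrite the eigen-equation as `M i j ≤ λ + u i - u j` for all `i, j`, with equality for some
`j = f i` in every row. Along any circuit the right-hand sides telescope, so every circuit mean
is at most `λ`. Iterating `f` on the finite set of nodes eventually closes a circuit all of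
whose arcs are tight, and its mean is exactly `λ`.
-/

/-- The set of average weights of elementary circuits of the precedence graph of a
max-plus matrix `M` (entries in `ℝ ∪ {-∞} = WithBot ℝ`).  An elementary circuit is
given by an injective map `c : Fin (k+1) → Fin n` all of whose cyclically consecutive
arcs are present in `M`. -/
def circuitMeans {n : ℕ} (M : Fin n → Fin n → WithBot ℝ) : Set ℝ :=
  {m | ∃ (k : ℕ) (c : Fin (k + 1) → Fin n), Function.Injective c ∧
    (∀ l, M (c l) (c (l + 1)) ≠ ⊥) ∧
    m = (∑ l, (M (c l) (c (l + 1))).unbotD 0) / (k + 1)}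

/-- The maximal circuit mean `ρ(M)` of a max-plus matrix. -/
noncomputable def maxCircuitMean {n : ℕ} (M : Fin n → Fin n → WithBot ℝ) : ℝ :=
  sSup (circuitMeans M)

open Finset Function

theorem sum_sub_add_one_eq_zero {G : Type*} [AddCommGroup G] {k : ℕ} (x : Fin (k + 1) → G) :
    ∑ l, (x l - x (l + 1)) = 0 := by
  rw [sum_sub_distrib, Fintype.sum_equiv (Equiv.addRight 1) (fun l => x (l + 1)) x fun _ => rfl,
    sub_self]

theorem sum_add_sub_add_one {k : ℕ} (lam : ℝ) (x : Fin (k + 1) → ℝ) :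
    ∑ l, (lam + x l - x (l + 1)) = (k + 1) * lam := by
  simp only [add_sub_assoc, sum_add_distrib, sum_sub_add_one_eq_zero, sum_const, card_univ,
    Fintype.card_fin, nsmul_eq_mul, add_zero, Nat.cast_add, Nat.cast_one]

theorem WithBot.unbotD_le_sub_of_add_coe_le {a : WithBot ℝ} {d y z : ℝ} (ha : a ≠ ⊥)
    (h : a + (y : WithBot ℝ) ≤ (z : WithBot ℝ)) : a.unbotD d ≤ z - y := by
  lift a to ℝ using ha
  rw [WithBot.unbotD_coe, le_sub_iff_add_le]
  exact_mod_cast h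

theorem WithBot.eq_coe_sub_of_add_coe_eq {a : WithBot ℝ} {y z : ℝ}
    (h : a + (y : WithBot ℝ) = (z : WithBot ℝ)) : a = ((z - y : ℝ) : WithBot ℝ) := by
  induction a using WithBot.recBotCoe with
  | bot => exact absurd h.symm (by simp)
  | coe a =>
    rw [WithBot.coe_inj, eq_sub_iff_add_eq]
    exact_mod_cast h

theorem Function.exists_injective_cycle_of_finite {α : Type*} [Finite α] (f : α → α) (x : α) :
    ∃ (k : ℕ) (c : Fin (k + 1) → α), Injective c ∧ ∀ l, c (l + 1) = f (c l) := by
  obtain ⟨a, b, hab, heq⟩ : ∃ a b, a < b ∧ f^[a] x = f^[b] x := by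
    obtain ⟨a, b, hab, heq⟩ := Finite.exists_ne_map_eq_of_infinite fun m : ℕ => f^[m] x
    rcases lt_or_gt_of_ne hab with h | h
    exacts [⟨a, b, h, heq⟩, ⟨b, a, h, heq.symm⟩]
  have hy : f^[a] x ∈ periodicPts f := mk_mem_periodicPts (Nat.sub_pos_of_lt hab)
    (by rw [IsPeriodicPt, IsFixedPt, ← iterate_add_apply, Nat.sub_add_cancel hab.le, heq])
  obtain ⟨k, hk⟩ := Nat.exists_eq_add_one_of_ne_zero (minimalPeriod_pos_of_mem_periodicPts hy).ne'
  refine ⟨k, fun l => f^[l] (f^[a] x), fun l l' h => Fin.ext ?_, fun l => ?_⟩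
  · exact iterate_injOn_Iio_minimalPeriod (by rw [Set.mem_Iio, hk]; exact l.isLt)
      (by rw [Set.mem_Iio, hk]; exact l'.isLt) h
  · have hper : IsPeriodicPt f (k + 1) (f^[a] x) := hk ▸ isPeriodicPt_minimalPeriod f _
    simp only [Fin.val_add, Fin.val_one', Nat.add_mod_mod]
    rw [hper.iterate_mod_apply, iterate_succ_apply']

section circuitMeans

variable {n : ℕ} {M : Fin n → Fin n → WithBot ℝ} {lam : ℝ} {u : Fin n → ℝ}

theorem mem_upperBounds_circuitMeans
    (h : ∀ i j, M i j + (u j : WithBot ℝ) ≤ ((lam + u i : ℝ) : WithBot ℝ)) :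
    lam ∈ upperBounds (circuitMeans M) := by
  rintro _ ⟨k, c, -, harc, rfl⟩
  rw [div_le_iff₀ (by positivity)]
  calc ∑ l, (M (c l) (c (l + 1))).unbotD 0
      ≤ ∑ l, (lam + u (c l) - u (c (l + 1))) :=
        sum_le_sum fun l _ => WithBot.unbotD_le_sub_of_add_coe_le (harc l) (h _ _)
    _ = lam * (k + 1) := by rw [sum_add_sub_add_one, mul_comm]

theorem mem_circuitMeans_of_forall_exists_eq (i₀ : Fin n)
    (h : ∀ i, ∃ j, M i j = ((lam + u i - u j : ℝ) : WithBot ℝ)) :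
    lam ∈ circuitMeans M := by
  choose f hf using h
  obtain ⟨k, c, hinj, hstep⟩ := exists_injective_cycle_of_finite f i₀
  have harc : ∀ l, M (c l) (c (l + 1)) = ((lam + u (c l) - u (c (l + 1)) : ℝ) : WithBot ℝ) :=
    fun l => hstep l ▸ hf (c l)
  refine ⟨k, c, hinj, fun l => harc l ▸ WithBot.coe_ne_bot, ?_⟩
  simp only [harc, WithBot.unbotD_coe, sum_add_sub_add_one]
  field_simp

end circuitMeans

/-- if a max-plus matrix `M` has a finite tropical eigenvector `u ∈ ℝⁿ`
associated with an eigenvalue `λ ∈ ℝ`, i.e. `max_j (M_{ij} + u_j) = λ + u_i` for all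
`i`, then no row of `M` is identically `-∞` and `λ` is the maximal circuit mean of
`M`. -/
theorem tropical_eigenvalue_eq_maxCircuitMean
    {n : ℕ} (hn : 0 < n) (M : Fin n → Fin n → WithBot ℝ) (lam : ℝ)
    (u : Fin n → ℝ)
    (hu : ∀ i, (Finset.univ.sup'
          (Finset.univ_nonempty_iff.mpr (Fin.pos_iff_nonempty.mp hn))
          fun j => M i j + (u j : WithBot ℝ))
        = ((lam + u i : ℝ) : WithBot ℝ)) :
    (∀ i, ∃ j, M i j ≠ ⊥) ∧ lam = maxCircuitMean M := by
  have hle : ∀ i j, M i j + (u j : WithBot ℝ) ≤ ((lam + u i : ℝ) : WithBot ℝ) :=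
    fun i j => hu i ▸ le_sup' (fun j => M i j + (u j : WithBot ℝ)) (mem_univ j)
  have htight : ∀ i, ∃ j, M i j = ((lam + u i - u j : ℝ) : WithBot ℝ) := by
    intro i
    obtain ⟨j, -, hj⟩ := exists_mem_eq_sup' _ fun j => M i j + (u j : WithBot ℝ)
    exact ⟨j, WithBot.eq_coe_sub_of_add_coe_eq (hj ▸ hu i)⟩
  refine ⟨fun i => ?_, ?_⟩
  · obtain ⟨j, hj⟩ := htight i
    exact ⟨j, hj ▸ WithBot.coe_ne_bot⟩
  · have hgreatest : IsGreatest (circuitMeans M) lam :=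
      ⟨mem_circuitMeans_of_forall_exists_eq ⟨0, hn⟩ htight, mem_upperBounds_circuitMeans hle⟩
    exact hgreatest.csSup_eq.symm
end

section
/- Let F : ℝⁿ → ℝⁿ be monotone, additively homogeneous, and positively homogeneous (F(αx) = αF(x) for all x ∈ ℝⁿ and α > 0), and let ν ∈ ℝⁿ be a fixed point of F that is not proportional to the all-ones vector 𝟏. Define T : ℝⁿ → ℝⁿ by T(x) = F(x) + ν. Then lim_{k → ∞} T^k(x)/k = ν for every x ∈ ℝⁿ, and T has no eigenpair: there exist no u ∈ ℝⁿ and λ ∈ ℝ with T(u) = λ𝟏 + u. -/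
/-!
A monotone, additively homogeneous map on `ℝⁿ` is nonexpansive for the sup norm, hence so are
`T = F + ν` and all its iterates; consequently the escape rate `lim T^k(x)/k` does not depend on
`x`. Positive homogeneity and `F ν = ν` give `T^k(ν) = (k + 1) ν`, so this rate is `ν`. An
eigenpair `T u = λ𝟏 + u` would give `T^k(u) = u + kλ𝟏` by additive homogeneity, i.e. the rate
`λ𝟏`, which contradicts `ν` not being proportional to `𝟏`.
-/

open Filter Topology

section Nonexpansive

variable {ι : Type*} [Fintype ι] {F : (ι → ℝ) → (ι → ℝ)}

theorem Monotone.le_add_dist_smul_one (hmon : Monotone F)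
    (hah : ∀ (x : ι → ℝ) (c : ℝ), F (x + c • (1 : ι → ℝ)) = F x + c • (1 : ι → ℝ))
    (x y : ι → ℝ) : F x ≤ F y + dist x y • (1 : ι → ℝ) := by
  rw [← hah]
  refine hmon fun i => ?_
  have hi : |x i - y i| ≤ dist x y := by simpa only [Real.dist_eq] using dist_le_pi_dist x y i
  simp only [Pi.add_apply, Pi.smul_apply, Pi.one_apply, smul_eq_mul, mul_one]
  linarith [le_abs_self (x i - y i)]

theorem Monotone.lipschitzWith_one_of_map_add_smul_one (hmon : Monotone F)
    (hah : ∀ (x : ι → ℝ) (c : ℝ), F (x + c • (1 : ι → ℝ)) = F x + c • (1 : ι → ℝ)) :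
    LipschitzWith 1 F := by
  refine LipschitzWith.of_dist_le_mul fun x y => ?_
  rw [NNReal.coe_one, one_mul, dist_pi_le_iff dist_nonneg]
  intro i
  have hxy := hmon.le_add_dist_smul_one hah x y i
  have hyx := hmon.le_add_dist_smul_one hah y x i
  rw [dist_comm] at hyx
  simp only [Pi.add_apply, Pi.smul_apply, Pi.one_apply, smul_eq_mul, mul_one] at hxy hyx
  rw [Real.dist_eq, abs_le]
  constructor <;> linarith

end Nonexpansive

section EscapeRate

variable {E : Type*} [NormedAddCommGroup E] [NormedSpace ℝ E]

theorem tendsto_inv_smul_add_natCast_smul (u w : E) :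
    Tendsto (fun k : ℕ => (k : ℝ)⁻¹ • (u + (k : ℝ) • w)) atTop (𝓝 w) := by
  have hu : Tendsto (fun k : ℕ => (k : ℝ)⁻¹ • u) atTop (𝓝 0) := by
    simpa using (tendsto_inv_atTop_nhds_zero_nat (𝕜 := ℝ)).smul_const u
  refine (zero_add w ▸ hu.add_const w).congr' ?_
  filter_upwards [eventually_ne_atTop 0] with k hk
  rw [smul_add, smul_smul, inv_mul_cancel₀ (Nat.cast_ne_zero.mpr hk), one_smul]

theorem LipschitzWith.tendsto_inv_smul_iterate {T : E → E} (hT : LipschitzWith 1 T) {z w : E}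
    (hz : Tendsto (fun k : ℕ => (k : ℝ)⁻¹ • T^[k] z) atTop (𝓝 w)) (x : E) :
    Tendsto (fun k : ℕ => (k : ℝ)⁻¹ • T^[k] x) atTop (𝓝 w) := by
  have hdiff : Tendsto (fun k : ℕ => (k : ℝ)⁻¹ • (T^[k] x - T^[k] z)) atTop (𝓝 0) := by
    refine squeeze_zero_norm (fun k => ?_)
      (by simpa using (tendsto_inv_atTop_nhds_zero_nat (𝕜 := ℝ)).mul_const (dist x z))
    rw [norm_smul, norm_inv, Real.norm_natCast, ← dist_eq_norm]
    gcongr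
    simpa using (hT.iterate k).dist_le_mul x z
  exact (zero_add w ▸ hdiff.add hz).congr fun k => by rw [← smul_add, sub_add_cancel]

end EscapeRate

section Iterates

variable {E : Type*} [AddCommGroup E] [Module ℝ E]

theorem iterate_eq_add_natCast_smul {T : E → E} {u w : E}
    (hT : ∀ (x : E) (c : ℝ), T (x + c • w) = T x + c • w) (hu : T u = u + w) (k : ℕ) :
    T^[k] u = u + (k : ℝ) • w := by
  induction k with
  | zero => simp
  | succ k ih =>
    rw [Function.iterate_succ_apply', ih, hT, hu, Nat.cast_succ, add_smul, one_smul]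
    abel

theorem iterate_add_const_self_of_map_smul {F : E → E}
    (hph : ∀ (x : E) (a : ℝ), 0 < a → F (a • x) = a • F x) {ν : E} (hν : F ν = ν) (k : ℕ) : (fun y => F y + ν)^[k] ν = ν + (k : ℝ) • ν := by
  induction k with
  | zero => simp
  | succ k ih =>
    have hk : (0 : ℝ) < 1 + k := by positivity
    have hsum : ν + (k : ℝ) • ν = (1 + k : ℝ) • ν := by module
    rw [Function.iterate_succ_apply', ih, hsum, hph ν _ hk, hν, Nat.cast_succ]
    module

end Iterates

/-- let `F : ℝⁿ → ℝⁿ` be monotone, additively homogeneous and positively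
homogeneous, and let `ν` be a fixed point of `F` not proportional to the all-ones
vector.  Then `T := F + ν` satisfies `T^k(x)/k → ν` for every `x`, and `T` has no
eigenpair. -/
theorem no_eigenpair_of_nontrivial_recession_fixedPoint
    {n : ℕ} (F : (Fin n → ℝ) → (Fin n → ℝ))
    (hmon : Monotone F)
    (hah : ∀ (x : Fin n → ℝ) (c : ℝ), F (x + c • (1 : Fin n → ℝ)) = F x + c • (1 : Fin n → ℝ))
    (hph : ∀ (x : Fin n → ℝ) (a : ℝ), 0 < a → F (a • x) = a • F x)
    (ν : Fin n → ℝ) (hν : F ν = ν)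
    (hnt : ¬ ∃ c : ℝ, ν = c • (1 : Fin n → ℝ)) :
    (∀ x : Fin n → ℝ,
      Tendsto (fun k : ℕ => (k : ℝ)⁻¹ • (fun y => F y + ν)^[k] x) atTop (nhds ν)) ∧
    ¬ ∃ (u : Fin n → ℝ) (lam : ℝ), F u + ν = lam • (1 : Fin n → ℝ) + u := by
  have hT : LipschitzWith 1 (fun y => F y + ν) := by
    simpa only [mul_one, Function.comp_def] using
      (isometry_add_right ν).lipschitz.comp (hmon.lipschitzWith_one_of_map_add_smul_one hah)
  have hrate := hT.tendsto_inv_smul_iterate (z := ν) <| by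
    simpa only [iterate_add_const_self_of_map_smul hph hν] using
      tendsto_inv_smul_add_natCast_smul ν ν
  refine ⟨hrate, ?_⟩
  rintro ⟨u, lam, hu⟩
  have hTu : F u + ν = u + lam • (1 : Fin n → ℝ) := by rw [hu, add_comm]
  have hTadd (x : Fin n → ℝ) (c : ℝ) :
      F (x + c • lam • (1 : Fin n → ℝ)) + ν = F x + ν + c • lam • (1 : Fin n → ℝ) := by
    rw [smul_smul, hah, add_right_comm]
  have hrate_u := tendsto_inv_smul_add_natCast_smul u (lam • (1 : Fin n → ℝ))
  simp only [← iterate_eq_add_natCast_smul (T := fun y => F y + ν) hTadd hTu] at hrate_u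
  exact hnt ⟨lam, tendsto_nhds_unique (hrate u) hrate_u⟩
end
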